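/- Fix k ≥ 2. If (1, g_1, ..., g_k) is an M-sequence with g_k = a ≥ 1 and g_{k-1} ≤ C(m, k-1) for some integer m ≥ k, then a ≤ C(m+1, k). Consequently, any M-sequence ending in a must satisfy g_{k-1} = Ω(a^{(k-1)/k}), i.e., there is a constant c_k > 0 depending only on k with g_{k-1} ≥ c_k · a^{(k-1)/k}. -/

import Mathlib

/-- The largest `a` such that `C(a,i) ≤ n` (for `n ≥ 1`, `i ≥ 1`):
the top term of the `i`-th Macaulay representation of `n`. -/
def macaulayTop (n i : ℕ) : ℕ :=
  Nat.findGreatest (fun a => Nat.choose a i ≤ n) (n + i)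

/-- The Macaulay pseudo-power `n^{<i>}`: write the `i`-th Macaulay representation
`n = C(a_i,i) + C(a_{i-1},i-1) + ⋯ + C(a_j,j)` (computed greedily) and
return `C(a_i+1,i+1) + C(a_{i-1}+1,i) + ⋯ + C(a_j+1,j+1)`; also `0^{<i>} = 0`. -/
def pseudoPow : ℕ → ℕ → ℕ
  | _, 0 => 0
  | n, (i+1) =>
    if n = 0 then 0
    else Nat.choose (macaulayTop n (i+1) + 1) (i+2) +
      pseudoPow (n - Nat.choose (macaulayTop n (i+1)) (i+1)) i

/-- `(g 0, g 1, …, g k)` is an M-sequence: `g 0 = 1` and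
`g (i+1) ≤ (g i)^{<i>}` for all `1 ≤ i < k`. -/
def IsMSequence (g : ℕ → ℕ) (k : ℕ) : Prop :=
  g 0 = 1 ∧ ∀ i, 1 ≤ i → i < k → g (i + 1) ≤ pseudoPow (g i) i

/-! The pseudo-power is bounded by its value on binomial coefficients: `n ≤ C(m,i)` implies
`n^{<i>} ≤ C(m+1,i+1)`. This is proved by induction on `i`, peeling off the top Macaulay term
`C(t,i)` of `n`; the remainder is `< C(t,i-1)`, and Pascal's rule reassembles the bound.
For the asymptotic part take the least `m` with `g (k-1) ≤ C(m,k-1)`: then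
`a ≤ C(m+1,k) ≤ (m+1)^k`, while minimality and `C(m-1,k-1) ≥ (m-k+1)^(k-1)/(k-1)!` give
`(m+1)^(k-1) = O(g (k-1))`. -/

open Nat

lemma lt_choose_add_self (n : ℕ) {i : ℕ} (hi : 1 ≤ i) : n < (n + i).choose i := by
  rw [← choose_symm_add]
  calc n < (n + 1).choose n := by rw [choose_succ_self_right]; omega
    _ ≤ (n + i).choose n := choose_le_choose n (by omega)

lemma choose_macaulayTop_le {n : ℕ} (i : ℕ) (hn : 1 ≤ n) : (macaulayTop n i).choose i ≤ n :=
  findGreatest_spec (P := fun a => a.choose i ≤ n) (m := i) (by omega) (by simpa using hn)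

lemma lt_choose_succ_macaulayTop (n : ℕ) {i : ℕ} (hi : 1 ≤ i) :
    n < (macaulayTop n i + 1).choose i := by
  by_cases htop : macaulayTop n i + 1 ≤ n + i
  · exact not_le.mp (findGreatest_is_greatest (P := fun a => a.choose i ≤ n)
      (lt_add_one _) htop)
  · have : macaulayTop n i = n + i := le_antisymm (findGreatest_le _) (by omega)
    rw [this]
    exact (lt_choose_add_self n hi).trans_le (choose_le_succ _ _)

lemma macaulayTop_le {n m i : ℕ} (hn : 1 ≤ n) (h : n ≤ m.choose (i + 1)) :
    macaulayTop n (i + 1) ≤ m := by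
  by_contra! hm
  have hsucc : (m + 1).choose (i + 1) ≤ n :=
    (choose_le_choose _ hm).trans (choose_macaulayTop_le _ hn)
  rw [choose_succ_succ'] at hsucc
  have hmi : m < i := choose_eq_zero_iff.mp (by omega)
  have : m.choose (i + 1) = 0 := choose_eq_zero_of_lt (by omega)
  omega

@[simp]
lemma pseudoPow_zero_left (i : ℕ) : pseudoPow 0 i = 0 := by
  cases i <;> simp [pseudoPow]

lemma pseudoPow_succ_of_ne_zero {n : ℕ} (i : ℕ) (hn : n ≠ 0) :
    pseudoPow n (i + 1) = (macaulayTop n (i + 1) + 1).choose (i + 2) +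
      pseudoPow (n - (macaulayTop n (i + 1)).choose (i + 1)) i := by
  rw [pseudoPow, if_neg hn]

theorem pseudoPow_le_choose_succ {n m i : ℕ} (h : n ≤ m.choose i) :
    pseudoPow n i ≤ (m + 1).choose (i + 1) := by
  induction i generalizing n m with
  | zero => simp [pseudoPow]
  | succ i ih =>
    rcases Nat.eq_zero_or_pos n with rfl | hn
    · simp
    rw [pseudoPow_succ_of_ne_zero i hn.ne']
    have hlow := choose_macaulayTop_le (i + 1) hn
    have hhigh := lt_choose_succ_macaulayTop n (i := i + 1) (by omega)
    have htm := macaulayTop_le hn h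
    generalize macaulayTop n (i + 1) = t at hlow hhigh htm ⊢
    rw [choose_succ_succ'] at hhigh
    rcases htm.lt_or_eq with htm | rfl
    · have hrem := ih (n := n - t.choose (i + 1)) (m := t) (by omega)
      calc (t + 1).choose (i + 2) + pseudoPow (n - t.choose (i + 1)) i
          ≤ (t + 1).choose (i + 2) + (t + 1).choose (i + 1) := by omega
        _ = (t + 2).choose (i + 2) := by rw [choose_succ_succ' (t + 1) (i + 1)]; ring
        _ ≤ (m + 1).choose (i + 2) := choose_le_choose _ (by omega)
    · simp [show n - t.choose (i + 1) = 0 by omega]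

namespace IsMSequence

variable {g : ℕ → ℕ} {k i : ℕ}

theorem succ_le_choose_succ (hg : IsMSequence g k) (hi : 1 ≤ i) (hik : i < k) {m : ℕ}
    (h : g i ≤ m.choose i) : g (i + 1) ≤ (m + 1).choose (i + 1) :=
  (hg.2 i hi hik).trans (pseudoPow_le_choose_succ h)

theorem pos_of_succ_pos (hg : IsMSequence g k) (hi : 1 ≤ i) (hik : i < k)
    (h : 0 < g (i + 1)) : 0 < g i := by
  by_contra! h0
  have := hg.2 i hi hik
  rw [Nat.le_zero.mp h0, pseudoPow_zero_left] at this
  omega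

end IsMSequence

lemma succ_succ_pow_le_of_choose_lt {n j b : ℕ} (hb : 1 ≤ b) (h : n.choose j < b) :
    (n + 2) ^ j ≤ (j + 2) ^ j * j ! * b := by
  rcases lt_or_ge n j with hnj | hjn
  · calc (n + 2) ^ j ≤ (j + 2) ^ j * 1 * 1 := by simpa using Nat.pow_le_pow_left (by omega) j
      _ ≤ (j + 2) ^ j * j ! * b := by gcongr; exact factorial_pos j
  · have hdesc : (n + 1 - j) ^ j ≤ j ! * n.choose j := by
      rw [← descFactorial_eq_factorial_mul_choose]
      exact pow_sub_le_descFactorial n j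
    have hlin : n + 2 ≤ (j + 2) * (n + 1 - j) := by
      obtain ⟨d, rfl⟩ := Nat.exists_eq_add_of_le hjn
      rw [show j + d + 1 - j = d + 1 by omega]
      nlinarith
    calc (n + 2) ^ j ≤ ((j + 2) * (n + 1 - j)) ^ j := Nat.pow_le_pow_left hlin j
      _ = (j + 2) ^ j * (n + 1 - j) ^ j := mul_pow _ _ _
      _ ≤ (j + 2) ^ j * (j ! * b) := by gcongr; exact hdesc.trans (by gcongr)
      _ = (j + 2) ^ j * j ! * b := by ring

theorem exists_le_choose_and_succ_pow_le {j b : ℕ} (hj : 1 ≤ j) (hb : 1 ≤ b) :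
    ∃ m : ℕ, b ≤ m.choose j ∧ (m + 1) ^ j ≤ (j + 2) ^ j * j ! * b := by
  classical
  have hex : ∃ m : ℕ, b ≤ m.choose j := ⟨b + j, (lt_choose_add_self b hj).le⟩
  refine ⟨Nat.find hex, Nat.find_spec hex, ?_⟩
  rcases Nat.eq_zero_or_pos (Nat.find hex) with h0 | hpos
  · rw [h0, zero_add, one_pow]
    exact Nat.one_le_iff_ne_zero.mpr (by positivity)
  · obtain ⟨n, hn⟩ := Nat.exists_eq_add_of_lt hpos
    rw [hn]
    exact succ_succ_pow_le_of_choose_lt hb (not_le.mp (Nat.find_min hex (by omega)))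

lemma Real.rpow_sub_one_div_le_pow {x y : ℝ} {k : ℕ} (hk : 1 ≤ k) (hx : 0 ≤ x) (hy : 0 ≤ y)
    (hxy : x ≤ y ^ k) : x ^ (((k : ℝ) - 1) / k) ≤ y ^ (k - 1) := by
  have hk0 : (k : ℝ) ≠ 0 := by positivity
  calc x ^ (((k : ℝ) - 1) / k) ≤ (y ^ k) ^ (((k : ℝ) - 1) / k) :=
        Real.rpow_le_rpow hx hxy (div_nonneg (by simpa using hk) (by positivity))
    _ = y ^ ((k - 1 : ℕ) : ℝ) := by
        rw [← Real.rpow_natCast_mul hy, mul_div_cancel₀ _ hk0, Nat.cast_sub hk, Nat.cast_one]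
    _ = y ^ (k - 1) := Real.rpow_natCast y (k - 1)

/-- fix `k ≥ 2`. If `(1, g 1, …, g k)` is an M-sequence with
`g k = a ≥ 1` and `g (k-1) ≤ C(m, k-1)` for some integer `m ≥ k`, then
`a ≤ C(m+1, k)`. Consequently there is a constant `c > 0`, depending only on `k`,
such that any M-sequence ending in `a` satisfies `g (k-1) ≥ c * a^((k-1)/k)`. -/
theorem msequence_last_entry_bound (k : ℕ) (hk : 2 ≤ k) :
    (∀ (g : ℕ → ℕ) (m a : ℕ), IsMSequence g k → g k = a → 1 ≤ a → k ≤ m →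
        g (k - 1) ≤ Nat.choose m (k - 1) → a ≤ Nat.choose (m + 1) k) ∧
    ∃ c : ℝ, 0 < c ∧ ∀ (g : ℕ → ℕ) (a : ℕ), IsMSequence g k → g k = a → 1 ≤ a →
        c * (a : ℝ) ^ ((k - 1 : ℝ) / k) ≤ (g (k - 1) : ℝ) := by
  have hk1 : k - 1 + 1 = k := by omega
  have step : ∀ {g : ℕ → ℕ} (m : ℕ), IsMSequence g k → g (k - 1) ≤ m.choose (k - 1) →
      g k ≤ (m + 1).choose k := fun m hg h => by
    simpa only [hk1] using hg.succ_le_choose_succ (by omega) (by omega) h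
  refine ⟨fun g m a hg hga _ _ h => hga ▸ step m hg h,
    (((k + 1) ^ (k - 1) * (k - 1)! : ℕ) : ℝ)⁻¹, by positivity, fun g a hg hga ha => ?_⟩
  have hb : 1 ≤ g (k - 1) := hg.pos_of_succ_pos (by omega) (by omega) (by rw [hk1]; omega)
  obtain ⟨m, hbm, hmb⟩ := exists_le_choose_and_succ_pow_le (j := k - 1) (by omega) hb
  rw [show k - 1 + 2 = k + 1 by omega] at hmb
  have ham : (a : ℝ) ≤ ((m + 1 : ℕ) : ℝ) ^ k := by
    exact_mod_cast hga ▸ (step m hg hbm).trans (choose_le_pow _ _)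
  rw [inv_mul_le_iff₀ (by positivity)]
  calc (a : ℝ) ^ (((k : ℝ) - 1) / k) ≤ ((m + 1 : ℕ) : ℝ) ^ (k - 1) :=
        Real.rpow_sub_one_div_le_pow (by omega) (by positivity) (by positivity) ham
    _ ≤ _ := by exact_mod_cast hmb
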